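/- (Corollary: single-sentence existential positive characterization.) Let A be a fixed finite MTL-chain, P a predicate language, and φ a P-sentence that has an A-model. Then φ is 1-equivalent to an existential positive sentence if and only if the class of A-models of φ is closed under homomorphisms. -/

import Mathlib

noncomputable section
open Classical

universe u

/-- A finite MTL-chain: a finite linearly ordered set with least and greatest
elements, a commutative monoid operation `*` with unit `1 = ⊤` that is monotone
in each argument, and the residuum determined by `a * b ≤ c ↔ a ≤ resid b c`. -/
class MTLChain (A : Type u) extends Fintype A, LinearOrder A, CommMonoid A, BoundedOrder A where
  one_eq_top : (1 : A) = ⊤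
  mul_mono : ∀ {a b : A}, a ≤ b → ∀ c : A, c * a ≤ c * b
  resid : A → A → A
  resid_galois : ∀ a b c : A, a * b ≤ c ↔ a ≤ resid b c

noncomputable instance MTLChain.toCompleteLinearOrder (A : Type u) [MTLChain A] :
    CompleteLinearOrder A :=
  Fintype.toCompleteLinearOrder A

/-- A predicate language: predicate symbols and function symbols, each with
a finite arity.  (Nullary predicates are truth constants, nullary functions
are individual constants.)  Crisp equality `≈` is built into formulas. -/
structure Lang : Type (u + 1) where
  Pred : Type u
  predAr : Pred → ℕ
  Func : Type u
  funcAr : Func → ℕ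

variable {A : Type u} [MTLChain A] {L : Lang.{u}}

/-- Terms of a predicate language, with variables indexed by `ℕ`. -/
inductive Term (L : Lang.{u}) : Type u where
  | var : ℕ → Term L
  | func (f : L.Func) (ts : Fin (L.funcAr f) → Term L) : Term L

/-- Formulas: atomic formulas (predicates applied to terms, and crisp equality),
strong conjunction `&`, weak conjunction `∧`, weak disjunction `∨`,
implication `→`, and the quantifiers. -/
inductive Formula (L : Lang.{u}) : Type u where
  | rel (P : L.Pred) (ts : Fin (L.predAr P) → Term L) : Formula L
  | eq (t₁ t₂ : Term L) : Formula L
  | sconj (φ ψ : Formula L) : Formula L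
  | wconj (φ ψ : Formula L) : Formula L
  | wdisj (φ ψ : Formula L) : Formula L
  | impl (φ ψ : Formula L) : Formula L
  | all (x : ℕ) (φ : Formula L) : Formula L
  | ex (x : ℕ) (φ : Formula L) : Formula L

/-- An `A`-structure for the language `L`: a nonempty domain, an `A`-valued
interpretation of each predicate symbol, and an interpretation of each
function symbol. -/
structure Structure (L : Lang.{u}) (A : Type u) [MTLChain A] : Type (u + 1) where
  Dom : Type u
  [dom_nonempty : Nonempty Dom]
  funMap (f : L.Func) : (Fin (L.funcAr f) → Dom) → Dom
  relMap (P : L.Pred) : (Fin (L.predAr P) → Dom) → A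

attribute [instance] Structure.dom_nonempty

/-- Value of a term under an evaluation of the variables. -/
def Term.val (M : Structure L A) (v : ℕ → M.Dom) : Term L → M.Dom
  | .var n => v n
  | .func f ts => M.funMap f fun i => (ts i).val M v

/-- Truth value of a formula in an `A`-structure under an evaluation of the
variables.  Equality is crisp, `&` is interpreted by `*`, `∧` by minimum,
`∨` by maximum, `→` by the residuum, `∀` by infimum (= minimum) and `∃` by
supremum (= maximum) over the domain. -/
def Formula.val (M : Structure L A) : Formula L → (ℕ → M.Dom) → A
  | .rel P ts, v => M.relMap P fun i => (ts i).val M v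
  | .eq t₁ t₂, v => if t₁.val M v = t₂.val M v then 1 else ⊥
  | .sconj φ ψ, v => φ.val M v * ψ.val M v
  | .wconj φ ψ, v => φ.val M v ⊓ ψ.val M v
  | .wdisj φ ψ, v => φ.val M v ⊔ ψ.val M v
  | .impl φ ψ, v => MTLChain.resid (φ.val M v) (ψ.val M v)
  | .all x φ, v => ⨅ a : M.Dom, φ.val M (Function.update v x a)
  | .ex x φ, v => ⨆ a : M.Dom, φ.val M (Function.update v x a)

/-- Free variables of a term. -/
def Term.fvars : Term L → Set ℕ
  | .var n => {n}
  | .func _ ts => ⋃ i, (ts i).fvars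

/-- Free variables of a formula. -/
def Formula.fvars : Formula L → Set ℕ
  | .rel _ ts => ⋃ i, (ts i).fvars
  | .eq t₁ t₂ => t₁.fvars ∪ t₂.fvars
  | .sconj φ ψ => φ.fvars ∪ ψ.fvars
  | .wconj φ ψ => φ.fvars ∪ ψ.fvars
  | .wdisj φ ψ => φ.fvars ∪ ψ.fvars
  | .impl φ ψ => φ.fvars ∪ ψ.fvars
  | .all x φ => φ.fvars \ {x}
  | .ex x φ => φ.fvars \ {x}

/-- A sentence is a formula with no free variables. -/
def Formula.IsSentence (φ : Formula L) : Prop := φ.fvars = ∅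

/-- `φ` is valid in `M` (i.e. `‖φ‖_M = 1`). -/
def Valid (M : Structure L A) (φ : Formula L) : Prop :=
  ∀ v : ℕ → M.Dom, φ.val M v = 1

/-- `M` is an `A`-model of the set of sentences `T`. -/
def Models (M : Structure L A) (T : Set (Formula L)) : Prop :=
  ∀ φ ∈ T, Valid M φ

/-- Two structures are elementarily equivalent if the same sentences are valid
in both (i.e. they have the same theory). -/
def ElemEquiv (M N : Structure L A) : Prop :=
  ∀ φ : Formula L, φ.IsSentence → (Valid M φ ↔ Valid N φ)

/-- `g : M → N` is a homomorphism of `A`-structures: it commutes with the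
interpretation of function symbols, and preserves truth (value `1`) of
atomic predicates. -/
structure IsHom (M N : Structure L A) (g : M.Dom → N.Dom) : Prop where
  map_fun : ∀ (f : L.Func) (d : Fin (L.funcAr f) → M.Dom),
    g (M.funMap f d) = N.funMap f (g ∘ d)
  map_rel : ∀ (P : L.Pred) (d : Fin (L.predAr P) → M.Dom),
    M.relMap P d = 1 → N.relMap P (g ∘ d) = 1

/-- Atomic formulas. -/
inductive IsAtomicFormula : Formula L → Prop
  | rel (P : L.Pred) (ts : Fin (L.predAr P) → Term L) : IsAtomicFormula (.rel P ts)
  | eq (t₁ t₂ : Term L) : IsAtomicFormula (.eq t₁ t₂)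

/-- Quantifier-free formulas built from atomic formulas using only `∧` and `&`. -/
inductive QFConj : Formula L → Prop
  | atom {φ : Formula L} : IsAtomicFormula φ → QFConj φ
  | sconj {φ ψ : Formula L} : QFConj φ → QFConj ψ → QFConj (.sconj φ ψ)
  | wconj {φ ψ : Formula L} : QFConj φ → QFConj ψ → QFConj (.wconj φ ψ)

/-- Quantifier-free formulas built from atomic formulas using only `∧`. -/
inductive QFWConj : Formula L → Prop
  | atom {φ : Formula L} : IsAtomicFormula φ → QFWConj φ
  | wconj {φ ψ : Formula L} : QFWConj φ → QFWConj ψ → QFWConj (.wconj φ ψ)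

/-- Quantifier-free formulas built from atomic formulas using only `&`. -/
inductive QFSConj : Formula L → Prop
  | atom {φ : Formula L} : IsAtomicFormula φ → QFSConj φ
  | sconj {φ ψ : Formula L} : QFSConj φ → QFSConj ψ → QFSConj (.sconj φ ψ)

/-- Quantifier-free formulas built from atomic formulas using only `∧`, `∨` and `&`. -/
inductive QFPos : Formula L → Prop
  | atom {φ : Formula L} : IsAtomicFormula φ → QFPos φ
  | sconj {φ ψ : Formula L} : QFPos φ → QFPos ψ → QFPos (.sconj φ ψ)
  | wconj {φ ψ : Formula L} : QFPos φ → QFPos ψ → QFPos (.wconj φ ψ)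
  | wdisj {φ ψ : Formula L} : QFPos φ → QFPos ψ → QFPos (.wdisj φ ψ)

/-- Positive-primitive (∧&-primitive) formulas: `(∃ x̄) ψ` with `ψ`
quantifier-free built from atomic formulas using only `∧` and `&`. -/
inductive IsPP : Formula L → Prop
  | base {φ : Formula L} : QFConj φ → IsPP φ
  | ex {φ : Formula L} (x : ℕ) : IsPP φ → IsPP (.ex x φ)

/-- ∧-primitive formulas. -/
inductive IsWPrimitive : Formula L → Prop
  | base {φ : Formula L} : QFWConj φ → IsWPrimitive φ
  | ex {φ : Formula L} (x : ℕ) : IsWPrimitive φ → IsWPrimitive (.ex x φ)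

/-- &-primitive formulas. -/
inductive IsSPrimitive : Formula L → Prop
  | base {φ : Formula L} : QFSConj φ → IsSPrimitive φ
  | ex {φ : Formula L} (x : ℕ) : IsSPrimitive φ → IsSPrimitive (.ex x φ)

/-- Existential positive formulas: `(∃ x̄) ψ` with `ψ` quantifier-free built
from atomic formulas using only `∧`, `∨` and `&`. -/
inductive IsExPos : Formula L → Prop
  | base {φ : Formula L} : QFPos φ → IsExPos φ
  | ex {φ : Formula L} (x : ℕ) : IsExPos φ → IsExPos (.ex x φ)

/-- The `A`-direct product of a nonempty family of `A`-structures: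
cartesian product domain, coordinatewise interpretation of function symbols,
and predicates interpreted by the minimum of the coordinatewise values. -/
def dirProd {I : Type u} [Nonempty I] (Ms : I → Structure L A) : Structure L A where
  Dom := ∀ i, (Ms i).Dom
  funMap f d := fun i => (Ms i).funMap f fun k => d k i
  relMap P d := ⨅ i, (Ms i).relMap P fun k => d k i

/-- The data of a weak `A`-direct product of a family of `A`-structures: an
interpretation of the predicate symbols on the cartesian product taking value
`1` exactly when all the coordinatewise values are `1`. -/
structure WeakProdData {I : Type u} (Ms : I → Structure L A) : Type u where
  relMap (P : L.Pred) : (Fin (L.predAr P) → ∀ i, (Ms i).Dom) → A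
  rel_one_iff : ∀ (P : L.Pred) (d : Fin (L.predAr P) → ∀ i, (Ms i).Dom),
    relMap P d = 1 ↔ ∀ i, (Ms i).relMap P (fun k => d k i) = 1

/-- The weak `A`-direct product structure determined by such data. -/
def WeakProdData.toStructure {I : Type u} [Nonempty I] {Ms : I → Structure L A}
    (W : WeakProdData Ms) : Structure L A where
  Dom := ∀ i, (Ms i).Dom
  funMap f d := fun i => (Ms i).funMap f fun k => d k i
  relMap := W.relMap
/-! ### Auxiliary lemmas -/

section Aux

lemma A_one_top : (1 : A) = ⊤ := MTLChain.one_eq_top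

lemma A_le_one (a : A) : a ≤ 1 := by rw [A_one_top]; exact le_top

lemma A_eq_one_of_one_le {a : A} (h : 1 ≤ a) : a = 1 := le_antisymm (A_le_one a) h

lemma A_mul_le_left (a b : A) : a * b ≤ a := by
  have := MTLChain.mul_mono (A_le_one b) a
  simpa using this

lemma A_mul_eq_one_iff {a b : A} : a * b = 1 ↔ a = 1 ∧ b = 1 := by
  constructor
  · intro h
    constructor
    · exact A_eq_one_of_one_le (h ▸ A_mul_le_left a b : (1:A) ≤ a)
    · exact A_eq_one_of_one_le (h ▸ (mul_comm a b ▸ A_mul_le_left b a : a * b ≤ b) : (1:A) ≤ b)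
  · rintro ⟨rfl, rfl⟩; simp

lemma A_inf_eq_one_iff {a b : A} : a ⊓ b = 1 ↔ a = 1 ∧ b = 1 := by
  constructor
  · intro h
    exact ⟨A_eq_one_of_one_le (h ▸ inf_le_left), A_eq_one_of_one_le (h ▸ inf_le_right)⟩
  · rintro ⟨rfl, rfl⟩; simp

lemma A_sup_eq_one_iff {a b : A} : a ⊔ b = 1 ↔ a = 1 ∨ b = 1 := by
  constructor
  · intro h
    rcases le_total a b with hab | hab
    · right; rw [sup_eq_right.2 hab] at h; exact h
    · left; rw [sup_eq_left.2 hab] at h; exact h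
  · rintro (rfl | rfl)
    · exact A_eq_one_of_one_le le_sup_left
    · exact A_eq_one_of_one_le le_sup_right

lemma A_exists_iSup_eq {ι : Type*} [Nonempty ι] (f : ι → A) : ∃ i, (⨆ j, f j) = f i := by
  have h : sSup (Set.range f) ∈ Set.range f :=
    (Set.range_nonempty f).csSup_mem (Set.toFinite _)
  rcases h with ⟨i, hi⟩
  exact ⟨i, hi.symm⟩

lemma A_exists_iInf_eq {ι : Type*} [Nonempty ι] (f : ι → A) : ∃ i, (⨅ j, f j) = f i := by
  have h : sInf (Set.range f) ∈ Set.range f :=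
    (Set.range_nonempty f).csInf_mem (Set.toFinite _)
  rcases h with ⟨i, hi⟩
  exact ⟨i, hi.symm⟩

lemma A_iSup_eq_one_iff {ι : Type*} [Nonempty ι] (f : ι → A) :
    (⨆ i, f i) = 1 ↔ ∃ i, f i = 1 := by
  constructor
  · intro h; rcases A_exists_iSup_eq f with ⟨i, hi⟩; exact ⟨i, hi ▸ h⟩
  · rintro ⟨i, hi⟩; exact A_eq_one_of_one_le (hi ▸ le_iSup f i)

lemma A_iInf_eq_one_iff {ι : Type*} [Nonempty ι] (f : ι → A) :
    (⨅ i, f i) = 1 ↔ ∀ i, f i = 1 := by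
  constructor
  · intro h i; exact A_eq_one_of_one_le (h ▸ iInf_le f i)
  · intro h; exact A_eq_one_of_one_le (le_iInf fun i => (h i).ge)

/-- Pulling a constant out of a sup through a monotone-in-first-argument map. -/
lemma A_iSup_op {ι : Type*} [Nonempty ι] (h : A → A → A)
    (hmono : ∀ c, Monotone (fun a => h a c)) (f : ι → A) (c : A) :
    (⨆ i, h (f i) c) = h (⨆ i, f i) c := by
  apply le_antisymm
  · exact iSup_le fun i => hmono c (le_iSup f i)
  · rcases A_exists_iSup_eq f with ⟨i, hi⟩
    rw [hi]; exact le_iSup (fun i => h (f i) c) i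

end Aux

/-! ### Values depend only on free variables -/

section Congr

variable {M : Structure L A}

lemma Term.val_congr {v w : ℕ → M.Dom} : ∀ t : Term L,
    (∀ n ∈ t.fvars, v n = w n) → t.val M v = t.val M w
  | .var n, h => h n (by simp [Term.fvars])
  | .func f ts, h => by
      simp only [Term.val]
      congr 1
      funext i
      exact Term.val_congr (ts i) fun n hn => h n (by
        simp only [Term.fvars]; exact Set.mem_iUnion.2 ⟨i, hn⟩)

lemma update_comp {γ : Type*} (g : M.Dom → γ) (v : ℕ → M.Dom) (x : ℕ) (a : M.Dom) :
    g ∘ Function.update v x a = Function.update (g ∘ v) x (g a) := by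
  funext n
  by_cases hn : n = x
  · subst hn; simp
  · simp [Function.update_of_ne hn]

lemma Formula.val_congr : ∀ φ : Formula L, ∀ {v w : ℕ → M.Dom},
    (∀ n ∈ φ.fvars, v n = w n) → φ.val M v = φ.val M w
  | .rel P ts, v, w, h => by
      simp only [Formula.val]
      congr 1; funext i
      exact Term.val_congr (ts i) fun n hn => h n (Set.mem_iUnion.2 ⟨i, hn⟩)
  | .eq t₁ t₂, v, w, h => by
      simp only [Formula.val]
      rw [Term.val_congr t₁ fun n hn => h n (Or.inl hn),
        Term.val_congr t₂ fun n hn => h n (Or.inr hn)]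
  | .sconj φ ψ, v, w, h => by
      simp only [Formula.val]
      rw [Formula.val_congr φ fun n hn => h n (Or.inl hn),
        Formula.val_congr ψ fun n hn => h n (Or.inr hn)]
  | .wconj φ ψ, v, w, h => by
      simp only [Formula.val]
      rw [Formula.val_congr φ fun n hn => h n (Or.inl hn),
        Formula.val_congr ψ fun n hn => h n (Or.inr hn)]
  | .wdisj φ ψ, v, w, h => by
      simp only [Formula.val]
      rw [Formula.val_congr φ fun n hn => h n (Or.inl hn),
        Formula.val_congr ψ fun n hn => h n (Or.inr hn)]
  | .impl φ ψ, v, w, h => by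
      simp only [Formula.val]
      rw [Formula.val_congr φ fun n hn => h n (Or.inl hn),
        Formula.val_congr ψ fun n hn => h n (Or.inr hn)]
  | .all x φ, v, w, h => by
      simp only [Formula.val]
      apply iInf_congr; intro a
      apply Formula.val_congr φ
      intro n hn
      by_cases hx : n = x
      · subst hx; simp
      · simp only [Function.update_of_ne hx]
        exact h n ⟨hn, hx⟩
  | .ex x φ, v, w, h => by
      simp only [Formula.val]
      apply iSup_congr; intro a
      apply Formula.val_congr φ
      intro n hn
      by_cases hx : n = x
      · subst hx; simp
      · simp only [Function.update_of_ne hx]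
        exact h n ⟨hn, hx⟩

lemma Formula.val_sentence (φ : Formula L) (hφ : φ.IsSentence) (v w : ℕ → M.Dom) :
    φ.val M v = φ.val M w :=
  Formula.val_congr φ (by rw [Formula.IsSentence] at hφ; rw [hφ]; intro n hn; exact absurd hn (by simp))

lemma valid_iff_val_one {φ : Formula L} (hφ : φ.IsSentence) (v : ℕ → M.Dom) :
    Valid M φ ↔ φ.val M v = 1 := by
  constructor
  · intro h; exact h v
  · intro h w; rw [Formula.val_sentence φ hφ w v]; exact h

end Congr

/-! ### Existential positive formulas are preserved by homomorphisms -/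

section HomPres

variable {M N : Structure L A} {g : M.Dom → N.Dom}

lemma Term.val_hom (hg : IsHom M N g) (v : ℕ → M.Dom) :
    ∀ t : Term L, t.val N (g ∘ v) = g (t.val M v)
  | .var n => rfl
  | .func f ts => by
      simp only [Term.val]
      rw [hg.map_fun f fun i => (ts i).val M v]
      congr 1
      funext i
      exact Term.val_hom hg v (ts i)

lemma QFPos.val_hom (hg : IsHom M N g) {ψ : Formula L} (hψ : QFPos ψ) :
    ∀ {v : ℕ → M.Dom}, ψ.val M v = 1 → ψ.val N (g ∘ v) = 1 := by
  induction hψ with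
  | atom ha =>
    intro v h
    cases ha with
    | rel P ts =>
      simp only [Formula.val] at h ⊢
      have : (fun i => (ts i).val N (g ∘ v)) = g ∘ (fun i => (ts i).val M v) := by
        funext i; exact Term.val_hom hg v (ts i)
      rw [this]
      exact hg.map_rel P _ h
    | eq t₁ t₂ =>
      simp only [Formula.val] at h ⊢
      by_cases he : t₁.val M v = t₂.val M v
      · rw [Term.val_hom hg v t₁, Term.val_hom hg v t₂, if_pos (congrArg g he)]
      · rw [if_neg he] at h
        exact A_eq_one_of_one_le (h ▸ bot_le)
  | sconj _ _ ih₁ ih₂ =>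
    intro v h
    simp only [Formula.val] at h ⊢
    rcases A_mul_eq_one_iff.1 h with ⟨h₁, h₂⟩
    exact A_mul_eq_one_iff.2 ⟨ih₁ h₁, ih₂ h₂⟩
  | wconj _ _ ih₁ ih₂ =>
    intro v h
    simp only [Formula.val] at h ⊢
    rcases A_inf_eq_one_iff.1 h with ⟨h₁, h₂⟩
    exact A_inf_eq_one_iff.2 ⟨ih₁ h₁, ih₂ h₂⟩
  | wdisj _ _ ih₁ ih₂ =>
    intro v h
    simp only [Formula.val] at h ⊢
    rcases A_sup_eq_one_iff.1 h with h₁ | h₂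
    · exact A_sup_eq_one_iff.2 (Or.inl (ih₁ h₁))
    · exact A_sup_eq_one_iff.2 (Or.inr (ih₂ h₂))

lemma IsExPos.val_hom (hg : IsHom M N g) {α : Formula L} (hα : IsExPos α) :
    ∀ {v : ℕ → M.Dom}, α.val M v = 1 → α.val N (g ∘ v) = 1 := by
  induction hα with
  | base h => exact fun hv => h.val_hom hg hv
  | ex x _ ih =>
    intro v h
    simp only [Formula.val] at h ⊢
    rcases (A_iSup_eq_one_iff _).1 h with ⟨a, ha⟩
    apply (A_iSup_eq_one_iff _).2
    refine ⟨g a, ?_⟩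
    have := ih ha
    rwa [update_comp] at this

/-! ### Ultraproducts and the Łoś theorem -/

section Ultra

variable {I : Type u} (U : Ultrafilter I)

lemma exists_limU (f : I → A) : ∃ a : A, {i | f i = a} ∈ U := by
  have h : (⋃ a ∈ (Set.univ : Set A), f ⁻¹' {a}) ∈ U := by
    have : (⋃ a ∈ (Set.univ : Set A), f ⁻¹' {a}) = Set.univ := by ext x; simp
    rw [this]; exact Filter.univ_mem
  rcases (Ultrafilter.finite_biUnion_mem_iff Set.finite_univ).1 h with ⟨a, _, ha⟩
  exact ⟨a, ha⟩

/-- The `U`-limit of an `A`-valued family: the unique value taken on a `U`-large set. -/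
def limU (f : I → A) : A := Classical.choose (exists_limU U f)

lemma limU_spec (f : I → A) : {i | f i = limU U f} ∈ U :=
  Classical.choose_spec (exists_limU U f)

lemma limU_eq_of {f : I → A} {a : A} {S : Set I} (hS : S ∈ U) (h : ∀ i ∈ S, f i = a) :
    limU U f = a := by
  by_contra hne
  have h1 := limU_spec U f
  have h2 : {i | f i = limU U f} ∩ S ∈ U := Filter.inter_mem h1 hS
  rcases Filter.nonempty_of_mem h2 with ⟨i, hi1, hi2⟩
  exact hne ((hi1.symm.trans (h i hi2)))

lemma limU_const (a : A) : limU U (fun _ => a) = a :=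
  limU_eq_of U Filter.univ_mem (fun _ _ => rfl)

lemma limU_congr {f g : I → A} (h : {i | f i = g i} ∈ U) : limU U f = limU U g := by
  have := limU_spec U g
  exact limU_eq_of U (Filter.inter_mem h this) (fun i hi => hi.1.trans hi.2)

lemma limU_map2 (h : A → A → A) (f g : I → A) :
    limU U (fun i => h (f i) (g i)) = h (limU U f) (limU U g) := by
  apply limU_eq_of U (Filter.inter_mem (limU_spec U f) (limU_spec U g))
  intro i hi
  rw [hi.1, hi.2]

lemma limU_le_limU {f g : I → A} (h : {i | f i ≤ g i} ∈ U) : limU U f ≤ limU U g := by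
  have h2 := Filter.inter_mem h (Filter.inter_mem (limU_spec U f) (limU_spec U g))
  rcases Filter.nonempty_of_mem h2 with ⟨i, hle, hf, hg⟩
  rw [← hf, ← hg]; exact hle

lemma limU_eq_one_iff {f : I → A} : limU U f = 1 ↔ {i | f i = 1} ∈ U := by
  constructor
  · intro h; rw [← h]; exact limU_spec U f
  · intro h; exact limU_eq_of U h (fun i hi => hi)

variable (Ms : I → Structure L A)

/-- `U`-almost-everywhere equality on the product of the domains. -/
def uSetoid : Setoid (∀ i, (Ms i).Dom) where
  r d e := {i | d i = e i} ∈ U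
  iseqv := by
    refine ⟨fun d => ?_, ?_, ?_⟩
    · have : {i | d i = d i} = Set.univ := by ext i; simp
      rw [this]; exact Filter.univ_mem
    · intro d e h
      have : {i | e i = d i} = {i | d i = e i} := by ext i; simp [eq_comm]
      rw [this]; exact h
    · intro d e f h1 h2
      exact Filter.mem_of_superset (Filter.inter_mem h1 h2)
        (fun i hi => hi.1.trans hi.2)

/-- The ultraproduct of a family of `A`-structures. -/
def uProd : Structure L A where
  Dom := Quotient (uSetoid U Ms)
  dom_nonempty := ⟨Quotient.mk _ (fun i => Classical.arbitrary _)⟩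
  funMap f d := Quotient.mk _ (fun i => (Ms i).funMap f (fun k => (d k).out i))
  relMap P d := limU U (fun i => (Ms i).relMap P (fun k => (d k).out i))

lemma uProd_funMap (f : L.Func) (e : Fin (L.funcAr f) → ∀ i, (Ms i).Dom) :
    (uProd U Ms).funMap f (fun k => Quotient.mk _ (e k)) =
      Quotient.mk _ (fun i => (Ms i).funMap f (fun k => e k i)) := by
  apply Quotient.sound
  have hk : ∀ k, {i | (Quotient.mk (uSetoid U Ms) (e k)).out i = e k i} ∈ U :=
    fun k => Quotient.exact (Quotient.out_eq (Quotient.mk (uSetoid U Ms) (e k)))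
  have hint : (⋂ k, {i | (Quotient.mk (uSetoid U Ms) (e k)).out i = e k i}) ∈ U :=
    Filter.iInter_mem.2 hk
  refine Filter.mem_of_superset hint ?_
  intro i hi
  show (Ms i).funMap f _ = (Ms i).funMap f _
  congr 1
  funext k
  exact Set.mem_iInter.1 hi k

lemma uProd_relMap (P : L.Pred) (e : Fin (L.predAr P) → ∀ i, (Ms i).Dom) :
    (uProd U Ms).relMap P (fun k => Quotient.mk _ (e k)) =
      limU U (fun i => (Ms i).relMap P (fun k => e k i)) := by
  apply limU_congr
  have hk : ∀ k, {i | (Quotient.mk (uSetoid U Ms) (e k)).out i = e k i} ∈ U :=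
    fun k => Quotient.exact (Quotient.out_eq (Quotient.mk (uSetoid U Ms) (e k)))
  have hint : (⋂ k, {i | (Quotient.mk (uSetoid U Ms) (e k)).out i = e k i}) ∈ U :=
    Filter.iInter_mem.2 hk
  refine Filter.mem_of_superset hint ?_
  intro i hi
  show (Ms i).relMap P _ = (Ms i).relMap P _
  congr 1
  funext k
  exact Set.mem_iInter.1 hi k

lemma uProd_term (w : ℕ → ∀ i, (Ms i).Dom) :
    ∀ t : Term L, t.val (uProd U Ms) (fun n => Quotient.mk _ (w n)) =
      Quotient.mk _ (fun i => t.val (Ms i) (fun n => w n i))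
  | .var n => rfl
  | .func f ts => by
      have ih : ∀ k, (ts k).val (uProd U Ms) (fun n => Quotient.mk _ (w n)) =
          Quotient.mk _ (fun i => (ts k).val (Ms i) (fun n => w n i)) :=
        fun k => uProd_term w (ts k)
      show (uProd U Ms).funMap f (fun k => (ts k).val (uProd U Ms) _) = _
      rw [show (fun k => (ts k).val (uProd U Ms) (fun n => Quotient.mk _ (w n))) =
        (fun k => Quotient.mk (uSetoid U Ms) (fun i => (ts k).val (Ms i) (fun n => w n i)))
        from funext ih]
      rw [uProd_funMap]
      rfl

/-- Łoś's theorem for `A`-valued ultraproducts. -/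
theorem los : ∀ (ψ : Formula L) (w : ℕ → ∀ i, (Ms i).Dom),
    ψ.val (uProd U Ms) (fun n => Quotient.mk _ (w n)) =
      limU U (fun i => ψ.val (Ms i) (fun n => w n i))
  | .rel P ts, w => by
      show (uProd U Ms).relMap P (fun k => (ts k).val (uProd U Ms) _) = _
      rw [show (fun k => (ts k).val (uProd U Ms) (fun n => Quotient.mk _ (w n))) =
        (fun k => Quotient.mk (uSetoid U Ms) (fun i => (ts k).val (Ms i) (fun n => w n i)))
        from funext (fun k => uProd_term U Ms w (ts k))]
      rw [uProd_relMap]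
      rfl
  | .eq t₁ t₂, w => by
      simp only [Formula.val]
      rw [uProd_term U Ms w t₁, uProd_term U Ms w t₂]
      by_cases he : Quotient.mk (uSetoid U Ms) (fun i => t₁.val (Ms i) (fun n => w n i)) =
          Quotient.mk (uSetoid U Ms) (fun i => t₂.val (Ms i) (fun n => w n i))
      · erw [if_pos he]
        have hmem := Quotient.exact he
        refine (limU_eq_of U hmem ?_).symm
        intro i hi
        simp only [Set.mem_setOf_eq] at hi
        rw [if_pos hi]
      · erw [if_neg he]
        have hmem : {i | t₁.val (Ms i) (fun n => w n i) = t₂.val (Ms i) (fun n => w n i)} ∉ U := by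
          intro hc
          exact he (Quotient.sound hc)
        have hcomp : {i | t₁.val (Ms i) (fun n => w n i) = t₂.val (Ms i) (fun n => w n i)}ᶜ ∈ U :=
          Ultrafilter.compl_mem_iff_notMem.2 hmem
        refine (limU_eq_of U hcomp ?_).symm
        intro i hi
        simp only [Set.mem_compl_iff, Set.mem_setOf_eq] at hi
        rw [if_neg hi]
  | .sconj φ ψ, w => by
      simp only [Formula.val]
      rw [los φ w, los ψ w, limU_map2]
  | .wconj φ ψ, w => by
      simp only [Formula.val]
      rw [los φ w, los ψ w, limU_map2]
  | .wdisj φ ψ, w => by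
      simp only [Formula.val]
      rw [los φ w, los ψ w, limU_map2]
  | .impl φ ψ, w => by
      simp only [Formula.val]
      rw [los φ w, los ψ w, limU_map2]
  | .all x φ, w => by
      simp only [Formula.val]
      -- both sides are infima
      have key : ∀ e : ∀ i, (Ms i).Dom,
          φ.val (uProd U Ms) (Function.update (fun n => Quotient.mk _ (w n)) x
            (Quotient.mk _ e)) =
          limU U (fun i => φ.val (Ms i) (Function.update (fun n => w n i) x (e i))) := by
        intro e
        have : Function.update (fun n => Quotient.mk (uSetoid U Ms) (w n)) x
            (Quotient.mk (uSetoid U Ms) e) =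
            fun n => Quotient.mk (uSetoid U Ms) (Function.update w x e n) := by
          funext n
          by_cases hn : n = x
          · subst hn; simp
          · simp [Function.update_of_ne hn]
        erw [this, los φ (Function.update w x e)]
        congr 1
        funext i
        congr 1
        funext n
        by_cases hn : n = x
        · subst hn; simp
        · simp [Function.update_of_ne hn]
      apply le_antisymm
      · -- pick coordinatewise witnesses
        have hwit : ∀ i : I, ∃ a : (Ms i).Dom,
            (⨅ b : (Ms i).Dom, φ.val (Ms i) (Function.update (fun n => w n i) x b)) =
              φ.val (Ms i) (Function.update (fun n => w n i) x a) :=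
          fun i => A_exists_iInf_eq _
        choose e he using hwit
        have h1 : (⨅ b : (uProd U Ms).Dom,
            φ.val (uProd U Ms) (Function.update (fun n => Quotient.mk _ (w n)) x b)) ≤
            φ.val (uProd U Ms) (Function.update (fun n => Quotient.mk _ (w n)) x
              (Quotient.mk _ e)) := iInf_le _ _
        refine h1.trans ?_
        rw [key e]
        apply le_of_eq
        apply limU_congr
        refine Filter.univ_mem' ?_
        intro i
        exact (he i).symm
      · -- lower bound
        apply le_iInf
        intro b
        have hb : b = Quotient.mk (uSetoid U Ms) b.out := (Quotient.out_eq b).symm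
        rw [hb, key b.out]
        apply limU_le_limU
        refine Filter.univ_mem' ?_
        intro i
        exact iInf_le _ _
  | .ex x φ, w => by
      simp only [Formula.val]
      have key : ∀ e : ∀ i, (Ms i).Dom,
          φ.val (uProd U Ms) (Function.update (fun n => Quotient.mk _ (w n)) x
            (Quotient.mk _ e)) =
          limU U (fun i => φ.val (Ms i) (Function.update (fun n => w n i) x (e i))) := by
        intro e
        have : Function.update (fun n => Quotient.mk (uSetoid U Ms) (w n)) x
            (Quotient.mk (uSetoid U Ms) e) =
            fun n => Quotient.mk (uSetoid U Ms) (Function.update w x e n) := by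
          funext n
          by_cases hn : n = x
          · subst hn; simp
          · simp [Function.update_of_ne hn]
        erw [this, los φ (Function.update w x e)]
        congr 1
        funext i
        congr 1
        funext n
        by_cases hn : n = x
        · subst hn; simp
        · simp [Function.update_of_ne hn]
      apply le_antisymm
      · apply iSup_le
        intro b
        have hb : b = Quotient.mk (uSetoid U Ms) b.out := (Quotient.out_eq b).symm
        rw [hb, key b.out]
        apply limU_le_limU
        refine Filter.univ_mem' ?_
        intro i
        simp only [Set.mem_setOf_eq]
        exact le_iSup (fun a => φ.val (Ms i) (Function.update (fun n => w n i) x a)) _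
      · have hwit : ∀ i : I, ∃ a : (Ms i).Dom,
            (⨆ b : (Ms i).Dom, φ.val (Ms i) (Function.update (fun n => w n i) x b)) =
              φ.val (Ms i) (Function.update (fun n => w n i) x a) :=
          fun i => A_exists_iSup_eq _
        choose e he using hwit
        have h1 : φ.val (uProd U Ms) (Function.update (fun n => Quotient.mk _ (w n)) x
              (Quotient.mk _ e)) ≤
            (⨆ b : (uProd U Ms).Dom,
              φ.val (uProd U Ms) (Function.update (fun n => Quotient.mk _ (w n)) x b)) :=
          le_iSup (fun b => φ.val (uProd U Ms) (Function.update (fun n => Quotient.mk _ (w n)) x b)) _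
        refine le_trans ?_ h1
        rw [key e]
        apply le_of_eq
        apply limU_congr
        refine Filter.univ_mem' ?_
        intro i
        exact (he i)

/-- Łoś for sentences. -/
lemma los_sentence (ψ : Formula L) (hψ : ψ.IsSentence) :
    Valid (uProd U Ms) ψ ↔ {i | Valid (Ms i) ψ} ∈ U := by
  have hw : ∀ i, Nonempty ((Ms i).Dom) := fun i => (Ms i).dom_nonempty
  let w : ℕ → ∀ i, (Ms i).Dom := fun _ i => Classical.arbitrary _
  rw [valid_iff_val_one hψ (fun n => Quotient.mk _ (w n)), los U Ms ψ w, limU_eq_one_iff]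
  constructor
  · intro h
    refine Filter.mem_of_superset h ?_
    intro i hi
    exact (valid_iff_val_one hψ (fun n => w n i)).2 hi
  · intro h
    refine Filter.mem_of_superset h ?_
    intro i hi
    exact hi (fun n => w n i)

end Ultra

/-! ### Relabelling variables and combining existential positive sentences -/

section Relabel

def Term.relabel (σ : ℕ → ℕ) : Term L → Term L
  | .var n => .var (σ n)
  | .func f ts => .func f (fun i => (ts i).relabel σ)

def Formula.relabel (σ : ℕ → ℕ) : Formula L → Formula L
  | .rel P ts => .rel P (fun i => (ts i).relabel σ)
  | .eq t₁ t₂ => .eq (t₁.relabel σ) (t₂.relabel σ)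
  | .sconj φ ψ => .sconj (φ.relabel σ) (ψ.relabel σ)
  | .wconj φ ψ => .wconj (φ.relabel σ) (ψ.relabel σ)
  | .wdisj φ ψ => .wdisj (φ.relabel σ) (ψ.relabel σ)
  | .impl φ ψ => .impl (φ.relabel σ) (ψ.relabel σ)
  | .all x φ => .all (σ x) (φ.relabel σ)
  | .ex x φ => .ex (σ x) (φ.relabel σ)

/-- All variables (free and bound) occurring in a formula. -/
def Formula.vars : Formula L → Set ℕ
  | .rel _ ts => ⋃ i, (ts i).fvars
  | .eq t₁ t₂ => t₁.fvars ∪ t₂.fvars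
  | .sconj φ ψ => φ.vars ∪ ψ.vars
  | .wconj φ ψ => φ.vars ∪ ψ.vars
  | .wdisj φ ψ => φ.vars ∪ ψ.vars
  | .impl φ ψ => φ.vars ∪ ψ.vars
  | .all x φ => insert x φ.vars
  | .ex x φ => insert x φ.vars

lemma Formula.fvars_subset_vars : ∀ φ : Formula L, φ.fvars ⊆ φ.vars
  | .rel P ts => by simp [Formula.fvars, Formula.vars]
  | .eq t₁ t₂ => by simp [Formula.fvars, Formula.vars]
  | .sconj φ ψ => Set.union_subset_union φ.fvars_subset_vars ψ.fvars_subset_vars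
  | .wconj φ ψ => Set.union_subset_union φ.fvars_subset_vars ψ.fvars_subset_vars
  | .wdisj φ ψ => Set.union_subset_union φ.fvars_subset_vars ψ.fvars_subset_vars
  | .impl φ ψ => Set.union_subset_union φ.fvars_subset_vars ψ.fvars_subset_vars
  | .all x φ => fun n hn => Set.mem_insert_of_mem x (φ.fvars_subset_vars hn.1)
  | .ex x φ => fun n hn => Set.mem_insert_of_mem x (φ.fvars_subset_vars hn.1)

lemma Term.fvars_relabel (σ : ℕ → ℕ) : ∀ t : Term L, (t.relabel σ).fvars ⊆ Set.range σ
  | .var n => by simp [Term.relabel, Term.fvars]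
  | .func f ts => by
      simp only [Term.relabel, Term.fvars]
      exact Set.iUnion_subset fun i => (ts i).fvars_relabel σ

lemma Formula.vars_relabel (σ : ℕ → ℕ) : ∀ φ : Formula L, (φ.relabel σ).vars ⊆ Set.range σ
  | .rel P ts => Set.iUnion_subset fun i => (ts i).fvars_relabel σ
  | .eq t₁ t₂ => Set.union_subset (t₁.fvars_relabel σ) (t₂.fvars_relabel σ)
  | .sconj φ ψ => Set.union_subset (φ.vars_relabel σ) (ψ.vars_relabel σ)
  | .wconj φ ψ => Set.union_subset (φ.vars_relabel σ) (ψ.vars_relabel σ)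
  | .wdisj φ ψ => Set.union_subset (φ.vars_relabel σ) (ψ.vars_relabel σ)
  | .impl φ ψ => Set.union_subset (φ.vars_relabel σ) (ψ.vars_relabel σ)
  | .all x φ => Set.insert_subset ⟨x, rfl⟩ (φ.vars_relabel σ)
  | .ex x φ => Set.insert_subset ⟨x, rfl⟩ (φ.vars_relabel σ)

lemma Term.fvars_relabel_subset (σ : ℕ → ℕ) : ∀ t : Term L,
    (t.relabel σ).fvars ⊆ σ '' t.fvars
  | .var n => by simp [Term.relabel, Term.fvars]
  | .func f ts => by
      simp only [Term.relabel, Term.fvars, Set.image_iUnion]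
      exact Set.iUnion_subset fun i =>
        ((ts i).fvars_relabel_subset σ).trans (Set.subset_iUnion (fun j => σ '' (ts j).fvars) i)

lemma Formula.fvars_relabel_subset (σ : ℕ → ℕ) : ∀ φ : Formula L,
    (φ.relabel σ).fvars ⊆ σ '' φ.fvars
  | .rel P ts => by
      simp only [Formula.relabel, Formula.fvars, Set.image_iUnion]
      exact Set.iUnion_subset fun i =>
        ((ts i).fvars_relabel_subset σ).trans (Set.subset_iUnion (fun j => σ '' (ts j).fvars) i)
  | .eq t₁ t₂ => by
      simp only [Formula.relabel, Formula.fvars, Set.image_union]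
      exact Set.union_subset_union (t₁.fvars_relabel_subset σ) (t₂.fvars_relabel_subset σ)
  | .sconj φ ψ => by
      simp only [Formula.relabel, Formula.fvars, Set.image_union]
      exact Set.union_subset_union (φ.fvars_relabel_subset σ) (ψ.fvars_relabel_subset σ)
  | .wconj φ ψ => by
      simp only [Formula.relabel, Formula.fvars, Set.image_union]
      exact Set.union_subset_union (φ.fvars_relabel_subset σ) (ψ.fvars_relabel_subset σ)
  | .wdisj φ ψ => by
      simp only [Formula.relabel, Formula.fvars, Set.image_union]
      exact Set.union_subset_union (φ.fvars_relabel_subset σ) (ψ.fvars_relabel_subset σ)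
  | .impl φ ψ => by
      simp only [Formula.relabel, Formula.fvars, Set.image_union]
      exact Set.union_subset_union (φ.fvars_relabel_subset σ) (ψ.fvars_relabel_subset σ)
  | .all x φ => by
      simp only [Formula.relabel, Formula.fvars]
      intro n hn
      rcases φ.fvars_relabel_subset σ hn.1 with ⟨m, hm, rfl⟩
      exact ⟨m, ⟨hm, fun hmx => hn.2 (by rw [Set.mem_singleton_iff] at hmx ⊢; rw [hmx])⟩, rfl⟩
  | .ex x φ => by
      simp only [Formula.relabel, Formula.fvars]
      intro n hn
      rcases φ.fvars_relabel_subset σ hn.1 with ⟨m, hm, rfl⟩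
      exact ⟨m, ⟨hm, fun hmx => hn.2 (by rw [Set.mem_singleton_iff] at hmx ⊢; rw [hmx])⟩, rfl⟩

lemma Formula.isSentence_relabel {σ : ℕ → ℕ} {φ : Formula L} (h : φ.IsSentence) :
    (φ.relabel σ).IsSentence := by
  rw [Formula.IsSentence] at h ⊢
  have := φ.fvars_relabel_subset σ
  rw [h] at this
  simpa using Set.subset_empty_iff.1 (by simpa using this)

variable {M : Structure L A}

lemma Term.val_relabel (σ : ℕ → ℕ) (v : ℕ → M.Dom) :
    ∀ t : Term L, (t.relabel σ).val M v = t.val M (v ∘ σ)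
  | .var n => rfl
  | .func f ts => by
      simp only [Term.relabel, Term.val]
      congr 1
      funext i
      exact (ts i).val_relabel σ v

lemma Formula.val_relabel {σ : ℕ → ℕ} (hσ : Function.Injective σ) :
    ∀ (φ : Formula L) (v : ℕ → M.Dom), (φ.relabel σ).val M v = φ.val M (v ∘ σ)
  | .rel P ts, v => by
      simp only [Formula.relabel, Formula.val]
      congr 1
      funext i
      exact (ts i).val_relabel σ v
  | .eq t₁ t₂, v => by
      simp only [Formula.relabel, Formula.val, Term.val_relabel]
  | .sconj φ ψ, v => by
      simp only [Formula.relabel, Formula.val]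
      rw [Formula.val_relabel hσ φ v, Formula.val_relabel hσ ψ v]
  | .wconj φ ψ, v => by
      simp only [Formula.relabel, Formula.val]
      rw [Formula.val_relabel hσ φ v, Formula.val_relabel hσ ψ v]
  | .wdisj φ ψ, v => by
      simp only [Formula.relabel, Formula.val]
      rw [Formula.val_relabel hσ φ v, Formula.val_relabel hσ ψ v]
  | .impl φ ψ, v => by
      simp only [Formula.relabel, Formula.val]
      rw [Formula.val_relabel hσ φ v, Formula.val_relabel hσ ψ v]
  | .all x φ, v => by
      simp only [Formula.relabel, Formula.val]
      apply iInf_congr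
      intro a
      rw [Formula.val_relabel hσ φ (Function.update v (σ x) a)]
      congr 1
      funext n
      by_cases hn : n = x
      · subst hn; simp
      · have : σ n ≠ σ x := fun hc => hn (hσ hc)
        simp [Function.update_of_ne hn, Function.update_of_ne this]
  | .ex x φ, v => by
      simp only [Formula.relabel, Formula.val]
      apply iSup_congr
      intro a
      rw [Formula.val_relabel hσ φ (Function.update v (σ x) a)]
      congr 1
      funext n
      by_cases hn : n = x
      · subst hn; simp
      · have : σ n ≠ σ x := fun hc => hn (hσ hc)
        simp [Function.update_of_ne hn, Function.update_of_ne this]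

lemma IsAtomicFormula.relabel {σ : ℕ → ℕ} {φ : Formula L} (h : IsAtomicFormula φ) :
    IsAtomicFormula (φ.relabel σ) := by
  cases h with
  | rel P ts => exact IsAtomicFormula.rel P _
  | eq t₁ t₂ => exact IsAtomicFormula.eq _ _

lemma QFPos.relabel {σ : ℕ → ℕ} {φ : Formula L} (h : QFPos φ) : QFPos (φ.relabel σ) := by
  induction h with
  | atom ha => exact QFPos.atom ha.relabel
  | sconj _ _ ih₁ ih₂ => exact QFPos.sconj ih₁ ih₂
  | wconj _ _ ih₁ ih₂ => exact QFPos.wconj ih₁ ih₂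
  | wdisj _ _ ih₁ ih₂ => exact QFPos.wdisj ih₁ ih₂

lemma IsExPos.relabel {σ : ℕ → ℕ} {φ : Formula L} (h : IsExPos φ) : IsExPos (φ.relabel σ) := by
  induction h with
  | base hq => exact IsExPos.base hq.relabel
  | ex x _ ih => exact IsExPos.ex _ ih

end Relabel

/-! ### Pulling existential quantifiers out of binary connectives -/

section Push

lemma A_iSup_op₂ {ι : Type*} [Nonempty ι] (h : A → A → A)
    (hmono : ∀ c, Monotone (h c)) (f : ι → A) (c : A) :
    (⨆ i, h c (f i)) = h c (⨆ i, f i) :=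
  A_iSup_op (fun a b => h b a) (fun c' => fun _ _ hab => hmono c' hab) f c

def pushB (c : Formula L → Formula L → Formula L) (α : Formula L) : Formula L → Formula L
  | .ex y β => .ex y (pushB c α β)
  | β => c α β

def pushA (c : Formula L → Formula L → Formula L) (β : Formula L) : Formula L → Formula L
  | .ex x α => .ex x (pushA c β α)
  | α => pushB c α β

lemma pushB_qf {c : Formula L → Formula L → Formula L} {α β : Formula L} (hβ : QFPos β) :
    pushB c α β = c α β := by
  induction hβ with
  | atom ha => cases ha <;> rfl
  | sconj _ _ _ _ => rfl
  | wconj _ _ _ _ => rfl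
  | wdisj _ _ _ _ => rfl

lemma pushA_qf {c : Formula L → Formula L → Formula L} {α β : Formula L} (hα : QFPos α) :
    pushA c β α = pushB c α β := by
  induction hα with
  | atom ha => cases ha <;> rfl
  | sconj _ _ _ _ => rfl
  | wconj _ _ _ _ => rfl
  | wdisj _ _ _ _ => rfl

lemma pushB_isExPos {c : Formula L → Formula L → Formula L}
    (hcq : ∀ {φ ψ : Formula L}, QFPos φ → QFPos ψ → QFPos (c φ ψ))
    {α β : Formula L} (hα : QFPos α) (hβ : IsExPos β) : IsExPos (pushB c α β) := by
  induction hβ with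
  | base hq => rw [pushB_qf hq]; exact IsExPos.base (hcq hα hq)
  | ex y _ ih => exact IsExPos.ex y ih

lemma pushA_isExPos {c : Formula L → Formula L → Formula L}
    (hcq : ∀ {φ ψ : Formula L}, QFPos φ → QFPos ψ → QFPos (c φ ψ))
    {α β : Formula L} (hα : IsExPos α) (hβ : IsExPos β) : IsExPos (pushA c β α) := by
  induction hα with
  | base hq => rw [pushA_qf hq]; exact pushB_isExPos hcq hq hβ
  | ex x _ ih => exact IsExPos.ex x ih

lemma pushB_fvars {c : Formula L → Formula L → Formula L}
    (hcfv : ∀ φ ψ : Formula L, (c φ ψ).fvars ⊆ φ.fvars ∪ ψ.fvars) (α : Formula L) :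
    ∀ β : Formula L, (pushB c α β).fvars ⊆ α.fvars ∪ β.fvars
  | .ex y β => by
      show (Formula.ex y (pushB c α β)).fvars ⊆ _
      intro n hn
      rcases hn with ⟨hn1, hn2⟩
      rcases pushB_fvars hcfv α β hn1 with h | h
      · exact Or.inl h
      · exact Or.inr ⟨h, hn2⟩
  | .rel P ts => hcfv α _
  | .eq t₁ t₂ => hcfv α _
  | .sconj φ ψ => hcfv α _
  | .wconj φ ψ => hcfv α _
  | .wdisj φ ψ => hcfv α _
  | .impl φ ψ => hcfv α _
  | .all x φ => hcfv α _

lemma pushA_fvars {c : Formula L → Formula L → Formula L}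
    (hcfv : ∀ φ ψ : Formula L, (c φ ψ).fvars ⊆ φ.fvars ∪ ψ.fvars) (β : Formula L) :
    ∀ α : Formula L, (pushA c β α).fvars ⊆ α.fvars ∪ β.fvars
  | .ex x α => by
      show (Formula.ex x (pushA c β α)).fvars ⊆ _
      intro n hn
      rcases hn with ⟨hn1, hn2⟩
      rcases pushA_fvars hcfv β α hn1 with h | h
      · exact Or.inl ⟨h, hn2⟩
      · exact Or.inr h
  | .rel P ts => pushB_fvars hcfv _ β
  | .eq t₁ t₂ => pushB_fvars hcfv _ β
  | .sconj φ ψ => pushB_fvars hcfv _ β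
  | .wconj φ ψ => pushB_fvars hcfv _ β
  | .wdisj φ ψ => pushB_fvars hcfv _ β
  | .impl φ ψ => pushB_fvars hcfv _ β
  | .all x φ => pushB_fvars hcfv _ β

variable {M : Structure L A}

lemma pushB_val {c : Formula L → Formula L → Formula L} {op : A → A → A}
    (hcval : ∀ (φ ψ : Formula L) (v : ℕ → M.Dom), (c φ ψ).val M v = op (φ.val M v) (ψ.val M v))
    (hm2 : ∀ a : A, Monotone (op a)) {α β : Formula L} (hβ : IsExPos β)
    (hdis : ∀ y ∈ β.vars, y ∉ α.fvars) :
    ∀ v : ℕ → M.Dom, (pushB c α β).val M v = op (α.val M v) (β.val M v) := by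
  induction hβ with
  | base hq => intro v; rw [pushB_qf hq]; exact hcval _ _ v
  | @ex β' y hβ' ih =>
    intro v
    show (⨆ a, (pushB c α β').val M (Function.update v y a)) = _
    have hy : ∀ a, α.val M (Function.update v y a) = α.val M v := by
      intro a
      apply Formula.val_congr
      intro n hn
      have : n ≠ y := fun hc => (hdis y (Set.mem_insert y _)) (hc ▸ hn)
      simp [Function.update_of_ne this]
    have : ∀ a : M.Dom, (pushB c α β').val M (Function.update v y a) =
        op (α.val M v) (β'.val M (Function.update v y a)) := by
      intro a
      rw [ih (fun z hz => hdis z (Set.mem_insert_of_mem y hz)), hy a]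
    rw [iSup_congr this]
    exact A_iSup_op₂ op hm2 _ _

lemma pushA_val {c : Formula L → Formula L → Formula L} {op : A → A → A}
    (hcval : ∀ (φ ψ : Formula L) (v : ℕ → M.Dom), (c φ ψ).val M v = op (φ.val M v) (ψ.val M v))
    (hm1 : ∀ b : A, Monotone (fun a => op a b)) (hm2 : ∀ a : A, Monotone (op a))
    {α β : Formula L} (hα : IsExPos α) (hβ : IsExPos β)
    (hdis : ∀ x ∈ α.vars, x ∉ β.vars) :
    ∀ v : ℕ → M.Dom, (pushA c β α).val M v = op (α.val M v) (β.val M v) := by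
  induction hα with
  | base hq =>
    intro v
    rw [pushA_qf hq]
    apply pushB_val hcval hm2 hβ
    intro y hy hcon
    exact hdis y (Formula.fvars_subset_vars _ hcon) hy
  | @ex α' x hα' ih =>
    intro v
    show (⨆ a, (pushA c β α').val M (Function.update v x a)) = _
    have hx : ∀ a, β.val M (Function.update v x a) = β.val M v := by
      intro a
      apply Formula.val_congr
      intro n hn
      have : n ≠ x := by
        intro hc
        subst hc
        exact hdis n (Set.mem_insert n _) (Formula.fvars_subset_vars β hn)
      simp [Function.update_of_ne this]
    have : ∀ a : M.Dom, (pushA c β α').val M (Function.update v x a) =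
        op (α'.val M (Function.update v x a)) (β.val M v) := by
      intro a
      rw [ih (fun z hz => hdis z (Set.mem_insert_of_mem x hz)), hx a]
    rw [iSup_congr this]
    exact A_iSup_op op hm1 _ _

/-- Combining two existential positive sentences through `∨` or `∧`. -/
lemma exPos_combine (c : Formula L → Formula L → Formula L) (op : A → A → A)
    (hcval : ∀ (M : Structure L A) (φ ψ : Formula L) (v : ℕ → M.Dom),
      (c φ ψ).val M v = op (φ.val M v) (ψ.val M v))
    (hcq : ∀ {φ ψ : Formula L}, QFPos φ → QFPos ψ → QFPos (c φ ψ))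
    (hcfv : ∀ φ ψ : Formula L, (c φ ψ).fvars ⊆ φ.fvars ∪ ψ.fvars)
    (hm1 : ∀ b : A, Monotone (fun a : A => op a b)) (hm2 : ∀ a : A, Monotone (op a))
    {α β : Formula L} (hα : IsExPos α) (hβ : IsExPos β)
    (sα : α.IsSentence) (sβ : β.IsSentence) :
    ∃ γ : Formula L, IsExPos γ ∧ γ.IsSentence ∧
      ∀ (M : Structure L A) (v : ℕ → M.Dom), γ.val M v = op (α.val M v) (β.val M v) := by
  have hinj₁ : Function.Injective (fun n : ℕ => 2 * n) := fun a b h => by simp only [] at h; omega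
  have hinj₂ : Function.Injective (fun n : ℕ => 2 * n + 1) := fun a b h => by simp only [] at h; omega
  set α' := α.relabel (fun n => 2 * n) with hα'def
  set β' := β.relabel (fun n => 2 * n + 1) with hβ'def
  refine ⟨pushA c β' α', pushA_isExPos hcq (hα.relabel) (hβ.relabel), ?_, ?_⟩
  · rw [Formula.IsSentence]
    apply Set.subset_empty_iff.1
    refine (pushA_fvars hcfv β' α').trans ?_
    rw [Formula.isSentence_relabel (σ := fun n => 2 * n) sα,
      Formula.isSentence_relabel (σ := fun n => 2 * n + 1) sβ]
    simp
  · intro M v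
    have hdis : ∀ x ∈ α'.vars, x ∉ β'.vars := by
      intro x hx hx'
      rcases Formula.vars_relabel _ α hx with ⟨m, rfl⟩
      rcases Formula.vars_relabel _ β hx' with ⟨m', hm'⟩
      simp only [] at hm'
      omega
    rw [pushA_val (hcval M) hm1 hm2 hα.relabel hβ.relabel hdis v,
      Formula.val_relabel hinj₁ α v, Formula.val_relabel hinj₂ β v,
      Formula.val_sentence α sα (v ∘ fun n => 2 * n) v,
      Formula.val_sentence β sβ (v ∘ fun n => 2 * n + 1) v]

lemma valid_combine_or {α β : Formula L} (hα : IsExPos α) (hβ : IsExPos β)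
    (sα : α.IsSentence) (sβ : β.IsSentence) :
    ∃ γ : Formula L, IsExPos γ ∧ γ.IsSentence ∧
      ∀ M : Structure L A, Valid M γ ↔ (Valid M α ∨ Valid M β) := by
  rcases exPos_combine (A := A) Formula.wdisj (· ⊔ ·) (fun M φ ψ v => rfl)
    (fun h1 h2 => QFPos.wdisj h1 h2) (fun φ ψ => subset_rfl)
    (fun b _ _ h => sup_le_sup_right h b) (fun a _ _ h => sup_le_sup_left h a)
    hα hβ sα sβ with ⟨γ, h1, h2, h3⟩
  refine ⟨γ, h1, h2, fun M => ?_⟩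
  have v₀ : ℕ → M.Dom := fun _ => Classical.arbitrary M.Dom
  rw [valid_iff_val_one h2 v₀, valid_iff_val_one sα v₀, valid_iff_val_one sβ v₀, h3 M v₀,
    A_sup_eq_one_iff]

lemma valid_combine_and {α β : Formula L} (hα : IsExPos α) (hβ : IsExPos β)
    (sα : α.IsSentence) (sβ : β.IsSentence) :
    ∃ γ : Formula L, IsExPos γ ∧ γ.IsSentence ∧
      ∀ M : Structure L A, Valid M γ ↔ (Valid M α ∧ Valid M β) := by
  rcases exPos_combine (A := A) Formula.wconj (· ⊓ ·) (fun M φ ψ v => rfl)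
    (fun h1 h2 => QFPos.wconj h1 h2) (fun φ ψ => subset_rfl)
    (fun b _ _ h => inf_le_inf_right b h) (fun a _ _ h => inf_le_inf_left a h)
    hα hβ sα sβ with ⟨γ, h1, h2, h3⟩
  refine ⟨γ, h1, h2, fun M => ?_⟩
  have v₀ : ℕ → M.Dom := fun _ => Classical.arbitrary M.Dom
  rw [valid_iff_val_one h2 v₀, valid_iff_val_one sα v₀, valid_iff_val_one sβ v₀, h3 M v₀,
    A_inf_eq_one_iff]

lemma valid_listOr : ∀ l : List (Formula L), l ≠ [] →
    (∀ α ∈ l, IsExPos α ∧ α.IsSentence) →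
    ∃ γ : Formula L, IsExPos γ ∧ γ.IsSentence ∧
      ∀ M : Structure L A, Valid M γ ↔ ∃ α ∈ l, Valid M α
  | [], h, _ => absurd rfl h
  | [a], _, h => by
      refine ⟨a, (h a (by simp)).1, (h a (by simp)).2, fun M => ?_⟩
      simp
  | a :: b :: t, _, h => by
      rcases valid_listOr (b :: t) (by simp) (fun α hα => h α (List.mem_cons_of_mem a hα))
        with ⟨γt, h1, h2, h3⟩
      rcases valid_combine_or (A := A) (h a (by simp)).1 h1 (h a (by simp)).2 h2 with ⟨γ, g1, g2, g3⟩
      refine ⟨γ, g1, g2, fun M => ?_⟩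
      rw [g3 M, h3 M]
      simp

lemma valid_listAnd : ∀ l : List (Formula L), l ≠ [] →
    (∀ α ∈ l, IsExPos α ∧ α.IsSentence) →
    ∃ γ : Formula L, IsExPos γ ∧ γ.IsSentence ∧
      ∀ M : Structure L A, Valid M γ ↔ ∀ α ∈ l, Valid M α
  | [], h, _ => absurd rfl h
  | [a], _, h => by
      refine ⟨a, (h a (by simp)).1, (h a (by simp)).2, fun M => ?_⟩
      simp
  | a :: b :: t, _, h => by
      rcases valid_listAnd (b :: t) (by simp) (fun α hα => h α (List.mem_cons_of_mem a hα))
        with ⟨γt, h1, h2, h3⟩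
      rcases valid_combine_and (A := A) (h a (by simp)).1 h1 (h a (by simp)).2 h2 with ⟨γ, g1, g2, g3⟩
      refine ⟨γ, g1, g2, fun M => ?_⟩
      rw [g3 M, h3 M]
      simp

end Push

/-! ### Diagrams: homomorphisms into ultrapowers -/

section Diagram

/-- Iterated existential quantification. -/
def exList (xs : List ℕ) (ψ : Formula L) : Formula L := xs.foldr .ex ψ

lemma exList_isExPos {ψ : Formula L} (h : IsExPos ψ) : ∀ xs : List ℕ, IsExPos (exList xs ψ)
  | [] => h
  | x :: t => IsExPos.ex x (exList_isExPos h t)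

lemma exList_fvars (ψ : Formula L) : ∀ xs : List ℕ,
    (exList xs ψ).fvars ⊆ {n | n ∈ ψ.fvars ∧ n ∉ xs}
  | [] => fun n hn => ⟨hn, by simp⟩
  | x :: t => by
      intro n hn
      rcases hn with ⟨hn1, hn2⟩
      rcases exList_fvars ψ t hn1 with ⟨h1, h2⟩
      refine ⟨h1, ?_⟩
      simp only [List.mem_cons, not_or]
      exact ⟨fun hc => hn2 (by rw [Set.mem_singleton_iff]; exact hc), h2⟩

variable {M : Structure L A}

lemma exList_le {ψ : Formula L} : ∀ (xs : List ℕ) (v w : ℕ → M.Dom),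
    (∀ n, n ∉ xs → v n = w n) → ψ.val M w ≤ (exList xs ψ).val M v
  | [], v, w, h => by
      have : v = w := funext fun n => h n (by simp)
      rw [this]
      exact le_rfl
  | x :: t, v, w, h => by
      show ψ.val M w ≤ ⨆ a, (exList t ψ).val M (Function.update v x a)
      have hle : ψ.val M w ≤ (exList t ψ).val M (Function.update v x (w x)) := by
        apply exList_le t
        intro n hn
        by_cases hnx : n = x
        · subst hnx; simp
        · rw [Function.update_of_ne hnx]
          exact h n (by simp [hnx, hn])
      exact hle.trans (le_iSup (fun a => (exList t ψ).val M (Function.update v x a)) (w x))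

lemma exList_extract {ψ : Formula L} : ∀ (xs : List ℕ) (v : ℕ → M.Dom),
    (exList xs ψ).val M v = 1 → ∃ w : ℕ → M.Dom, (∀ n, n ∉ xs → w n = v n) ∧ ψ.val M w = 1
  | [], v, h => ⟨v, fun _ _ => rfl, h⟩
  | x :: t, v, h => by
      rcases (A_iSup_eq_one_iff (fun a => (exList t ψ).val M (Function.update v x a))).1 h
        with ⟨a, ha⟩
      rcases exList_extract t (Function.update v x a) ha with ⟨w, hw1, hw2⟩
      refine ⟨w, ?_, hw2⟩
      intro n hn
      simp only [List.mem_cons, not_or] at hn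
      rw [hw1 n hn.2, Function.update_of_ne hn.1]

/-- Conjunction of a list of formulas. -/
def conjl : List (Formula L) → Formula L
  | [] => .eq (.var 0) (.var 0)
  | [a] => a
  | a :: b :: t => .wconj a (conjl (b :: t))

lemma conjl_qfpos : ∀ {l : List (Formula L)}, (∀ b ∈ l, QFPos b) → QFPos (conjl l)
  | [], _ => QFPos.atom (IsAtomicFormula.eq _ _)
  | [a], h => h a (by simp)
  | a :: b :: t, h =>
      QFPos.wconj (h a (by simp)) (conjl_qfpos (fun c hc => h c (List.mem_cons_of_mem a hc)))

lemma conjl_val_one : ∀ (l : List (Formula L)) (v : ℕ → M.Dom),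
    (conjl l).val M v = 1 ↔ ∀ b ∈ l, b.val M v = 1
  | [], v => by simp [conjl, Formula.val]
  | [a], v => by simp [conjl]
  | a :: b :: t, v => by
      show (a.val M v ⊓ (conjl (b :: t)).val M v) = 1 ↔ _
      rw [A_inf_eq_one_iff, conjl_val_one (b :: t) v]
      constructor
      · rintro ⟨h1, h2⟩ c hc
        rcases List.mem_cons.1 hc with rfl | hc
        · exact h1
        · exact h2 c hc
      · intro hc
        exact ⟨hc a (by simp), fun c hcc => hc c (List.mem_cons_of_mem a hcc)⟩

lemma conjl_fvars : ∀ l : List (Formula L), l ≠ [] →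
    (conjl l).fvars ⊆ {n | ∃ b ∈ l, n ∈ b.fvars}
  | [], h => absurd rfl h
  | [a], _ => by intro n hn; exact ⟨a, by simp, hn⟩
  | a :: b :: t, _ => by
      intro n hn
      rcases hn with hn | hn
      · exact ⟨a, by simp, hn⟩
      · rcases conjl_fvars (b :: t) (by simp) hn with ⟨c, hc, hnc⟩
        exact ⟨c, List.mem_cons_of_mem a hc, hnc⟩

/-- Atomic constraints on a structure `M`: predicate facts and function facts. -/
def Constraint (M : Structure L A) : Type u :=
  (Σ P : L.Pred, Fin (L.predAr P) → M.Dom) ⊕ (Σ f : L.Func, Fin (L.funcAr f) → M.Dom)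

/-- The constraints that are true in `M`. -/
def TrueC (M : Structure L A) : Set (Constraint M) :=
  fun cc => match cc with
    | .inl ⟨P, d⟩ => M.relMap P d = 1
    | .inr _ => True

/-- Satisfaction of a constraint through a map `h : M → N`. -/
def satC (N : Structure L A) (h : M.Dom → N.Dom) : Constraint M → Prop
  | .inl ⟨P, d⟩ => N.relMap P (h ∘ d) = 1
  | .inr ⟨f, d⟩ => h (M.funMap f d) = N.funMap f (h ∘ d)

open Classical in
/-- The elements of `M` mentioned in a constraint. -/
noncomputable def elemsOf : Constraint M → Finset M.Dom
  | .inl ⟨_, d⟩ => Finset.image d Finset.univ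
  | .inr ⟨f, d⟩ => insert (M.funMap f d) (Finset.image d Finset.univ)

/-- The atomic formula expressing a constraint, with variables given by `idx`. -/
def atomOf (idx : M.Dom → ℕ) : Constraint M → Formula L
  | .inl ⟨P, d⟩ => .rel P (fun k => .var (idx (d k)))
  | .inr ⟨f, d⟩ => .eq (.func f (fun k => .var (idx (d k)))) (.var (idx (M.funMap f d)))

lemma atomOf_qfpos (idx : M.Dom → ℕ) (cc : Constraint M) : QFPos (atomOf idx cc) := by
  rcases cc with ⟨P, d⟩ | ⟨f, d⟩
  · exact QFPos.atom (IsAtomicFormula.rel _ _)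
  · exact QFPos.atom (IsAtomicFormula.eq _ _)

lemma atomOf_fvars (idx : M.Dom → ℕ) (cc : Constraint M) :
    (atomOf idx cc).fvars ⊆ idx '' (elemsOf cc : Set M.Dom) := by
  classical
  rcases cc with ⟨P, d⟩ | ⟨f, d⟩
  · intro n hn
    rcases Set.mem_iUnion.1 hn with ⟨k, hk⟩
    rw [Set.mem_singleton_iff.1 hk]
    exact ⟨d k, by simp [elemsOf], rfl⟩
  · intro n hn
    rcases hn with hn | hn
    · rcases Set.mem_iUnion.1 hn with ⟨k, hk⟩
      rw [Set.mem_singleton_iff.1 hk]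
      exact ⟨d k, by simp [elemsOf], rfl⟩
    · rw [Set.mem_singleton_iff.1 hn]
      exact ⟨M.funMap f d, by simp [elemsOf], rfl⟩

/-- Finite satisfiability of the positive diagram of `M` in `N`, given that `N`
validates all existential positive sentences valid in `M`. -/
lemma finite_diagram_sat (N : Structure L A) (hbot : (⊥ : A) ≠ 1)
    (hsub : ∀ α : Formula L, IsExPos α → α.IsSentence → Valid M α → Valid N α)
    (F : Finset (Constraint M)) (hF : ∀ cc ∈ F, cc ∈ TrueC M) :
    ∃ h : M.Dom → N.Dom, ∀ cc ∈ F, satC N h cc := by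
  classical
  rcases Finset.eq_empty_or_nonempty F with rfl | hFne
  · exact ⟨fun _ => Classical.arbitrary N.Dom, fun cc hcc => absurd hcc (by simp)⟩
  set E : Finset M.Dom := F.biUnion elemsOf with hE
  set lst : List M.Dom := E.toList with hlst
  set idx : M.Dom → ℕ := fun m => lst.idxOf m with hidx
  have hmemE : ∀ cc ∈ F, ∀ m ∈ elemsOf cc, m ∈ E := by
    intro cc hcc m hm
    exact Finset.mem_biUnion.2 ⟨cc, hcc, hm⟩
  have hidx_lt : ∀ m ∈ E, idx m < lst.length := by
    intro m hm
    exact List.idxOf_lt_length_iff.2 (by rw [hlst]; exact Finset.mem_toList.2 hm)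
  set elemAt : ℕ → M.Dom := fun n => lst.getD n (Classical.arbitrary M.Dom) with helemAt
  have helem_idx : ∀ m ∈ E, elemAt (idx m) = m := by
    intro m hm
    have h1 : m ∈ lst := by rw [hlst]; exact Finset.mem_toList.2 hm
    rw [helemAt]
    show lst.getD (lst.idxOf m) _ = m
    rw [List.getD_eq_getElem lst _ (List.idxOf_lt_length_iff.2 h1)]
    exact List.getElem_idxOf _
  set atoms : List (Formula L) := F.toList.map (atomOf idx) with hatoms
  have hatoms_ne : atoms ≠ [] := by
    rw [hatoms]
    simp only [ne_eq, List.map_eq_nil_iff]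
    intro hc
    rcases hFne with ⟨x, hx⟩
    have : x ∈ F.toList := Finset.mem_toList.2 hx
    rw [hc] at this
    exact absurd this (by simp)
  set ψ : Formula L := conjl atoms with hψ
  set xs : List ℕ := List.range lst.length with hxs
  set αF : Formula L := exList xs ψ with hαF
  have hαF_expos : IsExPos αF := exList_isExPos (IsExPos.base (conjl_qfpos (by
    intro b hb
    rcases List.mem_map.1 (hatoms ▸ hb) with ⟨cc, _, rfl⟩
    exact atomOf_qfpos idx cc))) xs
  have hαF_sentence : αF.IsSentence := by
    rw [Formula.IsSentence]
    apply Set.subset_empty_iff.1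
    intro n hn
    rcases exList_fvars ψ xs hn with ⟨h1, h2⟩
    rcases conjl_fvars atoms hatoms_ne h1 with ⟨b, hb, hnb⟩
    rcases List.mem_map.1 (hatoms ▸ hb) with ⟨cc, hcc, rfl⟩
    rcases atomOf_fvars idx cc hnb with ⟨m, hm, rfl⟩
    have hmE : m ∈ E := hmemE cc (Finset.mem_toList.1 hcc) m hm
    exact h2 (by rw [hxs]; exact List.mem_range.2 (hidx_lt m hmE))
  -- αF is valid in M
  have hψM : ψ.val M elemAt = 1 := by
    rw [hψ, conjl_val_one]
    intro b hb
    rcases List.mem_map.1 (hatoms ▸ hb) with ⟨cc, hcc, rfl⟩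
    have hccF : cc ∈ F := Finset.mem_toList.1 hcc
    rcases cc with ⟨P, d⟩ | ⟨f, d⟩
    · show M.relMap P (fun k => (Term.var (idx (d k))).val M elemAt) = 1
      have : (fun k => (Term.var (idx (d k))).val M elemAt) = d := by
        funext k
        exact helem_idx (d k) (hmemE _ hccF (d k) (by simp [elemsOf]))
      rw [this]
      exact hF _ hccF
    · show (if (Term.func f fun k => Term.var (idx (d k))).val M elemAt =
          (Term.var (idx (M.funMap f d))).val M elemAt then (1:A) else ⊥) = 1
      rw [if_pos]
      show M.funMap f (fun k => elemAt (idx (d k))) = elemAt (idx (M.funMap f d))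
      have h1 : (fun k => elemAt (idx (d k))) = d := by
        funext k
        exact helem_idx (d k) (hmemE _ hccF (d k) (by simp [elemsOf]))
      rw [h1, helem_idx (M.funMap f d) (hmemE _ hccF _ (by simp [elemsOf]))]
  have hvalidM : Valid M αF := by
    rw [valid_iff_val_one hαF_sentence elemAt]
    apply A_eq_one_of_one_le
    rw [hαF]
    have := exList_le (ψ := ψ) xs elemAt elemAt (fun _ _ => rfl)
    rw [hψM] at this
    exact this
  have hvalidN : Valid N αF := hsub αF hαF_expos hαF_sentence hvalidM
  -- extract witnesses in N
  have hval : αF.val N (fun _ => Classical.arbitrary N.Dom) = 1 :=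
    hvalidN (fun _ => Classical.arbitrary N.Dom)
  rcases exList_extract xs _ hval with ⟨w, _, hw⟩
  rw [hψ, conjl_val_one] at hw
  refine ⟨fun m => w (idx m), ?_⟩
  intro cc hcc
  have hatom : (atomOf idx cc).val N w = 1 :=
    hw (atomOf idx cc) (by rw [hatoms]; exact List.mem_map.2 ⟨cc, Finset.mem_toList.2 hcc, rfl⟩)
  rcases cc with ⟨P, d⟩ | ⟨f, d⟩
  · exact hatom
  · show w (idx (M.funMap f d)) = N.funMap f (fun k => w (idx (d k)))
    by_cases heq : N.funMap f (fun k => w (idx (d k))) = w (idx (M.funMap f d))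
    · exact heq.symm
    · exfalso
      apply hbot
      have : (atomOf idx (Sum.inr ⟨f, d⟩)).val N w =
          (if N.funMap f (fun k => w (idx (d k))) = w (idx (M.funMap f d)) then (1:A) else ⊥) :=
        rfl
      rw [this, if_neg heq] at hatom
      exact hatom

/-- Every structure validating the existential positive theory of `M` admits a
homomorphism from `M` into an elementarily equivalent extension (an ultrapower). -/
theorem exists_hom_target (M N : Structure L A) (hbot : (⊥ : A) ≠ 1)
    (hsub : ∀ α : Formula L, IsExPos α → α.IsSentence → Valid M α → Valid N α) :
    ∃ (N' : Structure L A) (g : M.Dom → N'.Dom), IsHom M N' g ∧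
      ∀ ψ : Formula L, ψ.IsSentence → (Valid N' ψ ↔ Valid N ψ) := by
  classical
  set J := Finset {cc : Constraint M // cc ∈ TrueC M} with hJ
  have : Nonempty J := ⟨∅⟩
  set U : Ultrafilter J := Ultrafilter.of Filter.atTop with hU
  have hUmem : ∀ s : J, {F : J | s ⊆ F} ∈ U := by
    intro s
    have h1 : {F : J | s ⊆ F} = Set.Ici s := by
      ext F; exact Iff.rfl
    rw [h1]
    exact Ultrafilter.of_le _ (Filter.mem_atTop s)
  have hh : ∀ F : J, ∃ h : M.Dom → N.Dom,
      ∀ cc ∈ (F.image (fun x => x.val) : Finset (Constraint M)), satC N h cc := by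
    intro F
    apply finite_diagram_sat N hbot hsub
    intro cc hcc
    rcases Finset.mem_image.1 hcc with ⟨x, _, rfl⟩
    exact x.2
  choose h hhspec using hh
  set Ms : J → Structure L A := fun _ => N with hMs
  refine ⟨uProd U Ms, fun m => Quotient.mk _ (fun F => h F m), ?_, ?_⟩
  · constructor
    · intro f d
      have h1 : (fun k => Quotient.mk (uSetoid U Ms) (fun F => h F (d k))) ∘
          (fun k => k) = fun k => Quotient.mk (uSetoid U Ms) (fun F => h F (d k)) := rfl
      show Quotient.mk _ (fun F => h F (M.funMap f d)) =
        (uProd U Ms).funMap f (fun k => Quotient.mk (uSetoid U Ms) (fun F => h F (d k)))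
      rw [uProd_funMap U Ms f (fun k F => h F (d k))]
      apply Quotient.sound
      show {F : J | h F (M.funMap f d) = N.funMap f (fun k => h F (d k))} ∈ U
      set cc₀ : {cc : Constraint M // cc ∈ TrueC M} := ⟨Sum.inr ⟨f, d⟩, trivial⟩ with hcc₀
      refine Filter.mem_of_superset (hUmem {cc₀}) ?_
      intro F hF
      have : satC N (h F) (Sum.inr ⟨f, d⟩) := by
        apply hhspec F
        exact Finset.mem_image.2 ⟨cc₀, hF (Finset.mem_singleton_self cc₀), rfl⟩
      exact this
    · intro P d hd
      show (uProd U Ms).relMap P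
        ((fun m => Quotient.mk (uSetoid U Ms) (fun F => h F m)) ∘ d) = 1
      have h1 : ((fun m => Quotient.mk (uSetoid U Ms) (fun F => h F m)) ∘ d) =
          fun k => Quotient.mk (uSetoid U Ms) (fun F => h F (d k)) := rfl
      erw [h1, uProd_relMap U Ms P (fun k F => h F (d k))]
      set cc₀ : {cc : Constraint M // cc ∈ TrueC M} := ⟨Sum.inl ⟨P, d⟩, hd⟩ with hcc₀
      apply limU_eq_of U (hUmem {cc₀})
      intro F hF
      have : satC N (h F) (Sum.inl ⟨P, d⟩) := by
        apply hhspec F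
        exact Finset.mem_image.2 ⟨cc₀, hF (Finset.mem_singleton_self cc₀), rfl⟩
      exact this
  · intro ψ hψ
    rw [los_sentence U Ms ψ hψ]
    constructor
    · intro hmem
      by_contra hc
      have : {F : J | Valid (Ms F) ψ} = ∅ := by
        ext F; simp only [Set.mem_setOf_eq, Set.mem_empty_iff_false, iff_false]
        exact hc
      rw [this] at hmem
      exact Filter.empty_notMem (U : Filter J) hmem
    · intro hvalid
      have : {F : J | Valid (Ms F) ψ} = Set.univ := by
        ext F; simp only [Set.mem_setOf_eq, Set.mem_univ, iff_true]
        exact hvalid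
      rw [this]
      exact Filter.univ_mem

end Diagram

/-! ### The main argument -/

section Main

variable {φ : Formula L}

/-- Step A: a structure validating all existential positive consequences of `φ`
is "ex-pos dominated" by some model of `φ` (obtained as an ultraproduct). -/
lemma exists_expos_reflecting_model (hφ : φ.IsSentence)
    (hcons : ∃ M : Structure L A, Valid M φ) (N : Structure L A)
    (hN : ∀ α : Formula L, IsExPos α → α.IsSentence →
      (∀ M' : Structure L A, Valid M' φ → Valid M' α) → Valid N α) :
    ∃ Mstar : Structure L A, Valid Mstar φ ∧
      ∀ α : Formula L, IsExPos α → α.IsSentence → Valid Mstar α → Valid N α := by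
  classical
  set S := {α : Formula L // IsExPos α ∧ α.IsSentence ∧ ¬ Valid N α} with hS
  set K := Finset S with hK
  have key : ∀ G : K, ∃ M' : Structure L A, Valid M' φ ∧ ∀ a ∈ G, ¬ Valid M' a.val := by
    intro G
    by_contra hc
    push_neg at hc
    rcases Finset.eq_empty_or_nonempty G with rfl | hGne
    · rcases hcons with ⟨M₀, hM₀⟩
      rcases hc M₀ hM₀ with ⟨a, ha, _⟩
      exact absurd ha (Finset.notMem_empty a)
    · set l : List (Formula L) := G.toList.map (fun a => a.val) with hl
      have hlne : l ≠ [] := by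
        rw [hl]
        simp only [ne_eq, List.map_eq_nil_iff]
        intro hcl
        rcases hGne with ⟨x, hx⟩
        have := Finset.mem_toList.2 hx
        rw [hcl] at this
        exact absurd this (by simp)
      have hprops : ∀ α ∈ l, IsExPos α ∧ α.IsSentence := by
        intro α hα
        rcases List.mem_map.1 (hl ▸ hα) with ⟨a, _, rfl⟩
        exact ⟨a.2.1, a.2.2.1⟩
      rcases valid_listOr (A := A) l hlne hprops with ⟨γ, hγ1, hγ2, hγ3⟩
      have hcons' : ∀ M' : Structure L A, Valid M' φ → Valid M' γ := by
        intro M' hM'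
        rcases hc M' hM' with ⟨a, ha, hva⟩
        exact (hγ3 M').2 ⟨a.val, by
          rw [hl]; exact List.mem_map.2 ⟨a, Finset.mem_toList.2 ha, rfl⟩, hva⟩
      have hNγ : Valid N γ := hN γ hγ1 hγ2 hcons'
      rcases (hγ3 N).1 hNγ with ⟨α, hα, hvα⟩
      rcases List.mem_map.1 (hl ▸ hα) with ⟨a, _, rfl⟩
      exact a.2.2.2 hvα
  choose Ms hMs1 hMs2 using key
  have : Nonempty K := ⟨∅⟩
  set U : Ultrafilter K := Ultrafilter.of Filter.atTop with hU
  have hUmem : ∀ s : K, {G : K | s ⊆ G} ∈ U := by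
    intro s
    have h1 : {G : K | s ⊆ G} = Set.Ici s := by ext G; exact Iff.rfl
    rw [h1]
    exact Ultrafilter.of_le _ (Filter.mem_atTop s)
  refine ⟨uProd U Ms, ?_, ?_⟩
  · rw [los_sentence U Ms φ hφ]
    have : {G : K | Valid (Ms G) φ} = Set.univ := by
      ext G; simp only [Set.mem_setOf_eq, Set.mem_univ, iff_true]; exact hMs1 G
    rw [this]; exact Filter.univ_mem
  · intro α hexp hsent hval
    by_contra hc
    set a₀ : S := ⟨α, hexp, hsent, hc⟩ with ha₀
    have h1 : {G : K | Valid (Ms G) α} ∈ U := (los_sentence U Ms α hsent).1 hval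
    have h2 : {G : K | a₀ ∈ G} ∈ U := by
      have : {G : K | a₀ ∈ G} ⊇ {G : K | {a₀} ⊆ G} := by
        intro G hG; exact hG (Finset.mem_singleton_self a₀)
      exact Filter.mem_of_superset (hUmem {a₀}) this
    rcases Filter.nonempty_of_mem (Filter.inter_mem h1 h2) with ⟨G, hG1, hG2⟩
    exact hMs2 G a₀ hG2 hG1

/-- Claim 1: if the class of models of `φ` is closed under homomorphisms then any
structure validating all existential positive consequences of `φ` is a model of `φ`. -/
lemma valid_of_expos_consequences (hφ : φ.IsSentence)
    (hcons : ∃ M : Structure L A, Valid M φ) (hbot : (⊥ : A) ≠ 1)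
    (hclosed : ∀ (M N : Structure L A) (g : M.Dom → N.Dom),
      IsHom M N g → Valid M φ → Valid N φ)
    (N : Structure L A)
    (hN : ∀ α : Formula L, IsExPos α → α.IsSentence →
      (∀ M' : Structure L A, Valid M' φ → Valid M' α) → Valid N α) :
    Valid N φ := by
  rcases exists_expos_reflecting_model hφ hcons N hN with ⟨Mstar, hM1, hM2⟩
  rcases exists_hom_target Mstar N hbot hM2 with ⟨N', g, hg, hequiv⟩
  exact (hequiv φ hφ).1 (hclosed Mstar N' g hg hM1)

/-- Claim 2: compactness yields finitely many existential positive consequences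
axiomatizing `φ`. -/
lemma exists_finite_expos_axioms (hφ : φ.IsSentence)
    (hcons : ∃ M : Structure L A, Valid M φ) (hbot : (⊥ : A) ≠ 1)
    (hclosed : ∀ (M N : Structure L A) (g : M.Dom → N.Dom),
      IsHom M N g → Valid M φ → Valid N φ) :
    ∃ l : List (Formula L),
      (∀ α ∈ l, IsExPos α ∧ α.IsSentence ∧
        ∀ M : Structure L A, Valid M φ → Valid M α) ∧
      ∀ N : Structure L A, (∀ α ∈ l, Valid N α) → Valid N φ := by
  classical
  by_contra hc
  push_neg at hc
  set T := {α : Formula L // IsExPos α ∧ α.IsSentence ∧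
    ∀ M : Structure L A, Valid M φ → Valid M α} with hT
  set I := Finset T with hI
  have key : ∀ F : I, ∃ N : Structure L A,
      (∀ a ∈ F, Valid N a.val) ∧ ¬ Valid N φ := by
    intro F
    set l : List (Formula L) := F.toList.map (fun a => a.val) with hl
    rcases hc l (by
      intro α hα
      rcases List.mem_map.1 (hl ▸ hα) with ⟨a, _, rfl⟩
      exact a.2) with ⟨N, hN1, hN2⟩
    refine ⟨N, ?_, hN2⟩
    intro a ha
    exact hN1 a.val (by rw [hl]; exact List.mem_map.2 ⟨a, Finset.mem_toList.2 ha, rfl⟩)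
  choose Ns hNs1 hNs2 using key
  have : Nonempty I := ⟨∅⟩
  set U : Ultrafilter I := Ultrafilter.of Filter.atTop with hU
  have hUmem : ∀ s : I, {F : I | s ⊆ F} ∈ U := by
    intro s
    have h1 : {F : I | s ⊆ F} = Set.Ici s := by ext F; exact Iff.rfl
    rw [h1]
    exact Ultrafilter.of_le _ (Filter.mem_atTop s)
  set Ninf := uProd U Ns with hNinf
  have hNinf_expos : ∀ α : Formula L, IsExPos α → α.IsSentence →
      (∀ M' : Structure L A, Valid M' φ → Valid M' α) → Valid Ninf α := by
    intro α hexp hsent hcons'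
    set a₀ : T := ⟨α, hexp, hsent, hcons'⟩ with ha₀
    rw [hNinf, los_sentence U Ns α hsent]
    refine Filter.mem_of_superset (hUmem {a₀}) ?_
    intro F hF
    exact hNs1 F a₀ (hF (Finset.mem_singleton_self a₀))
  have hNinf_φ : Valid Ninf φ :=
    valid_of_expos_consequences hφ hcons hbot hclosed Ninf hNinf_expos
  rw [hNinf, los_sentence U Ns φ hφ] at hNinf_φ
  have : {F : I | Valid (Ns F) φ} = ∅ := by
    ext F; simp only [Set.mem_setOf_eq, Set.mem_empty_iff_false, iff_false]
    exact hNs2 F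
  rw [this] at hNinf_φ
  exact Filter.empty_notMem (U : Filter I) hNinf_φ

/-- The trivial existential positive sentence `(∃x)(x ≈ x)`. -/
def trivSentence (L : Lang.{u}) : Formula L := .ex 0 (.eq (.var 0) (.var 0))

lemma trivSentence_expos : IsExPos (trivSentence L) :=
  IsExPos.ex 0 (IsExPos.base (QFPos.atom (IsAtomicFormula.eq _ _)))

lemma trivSentence_sentence : (trivSentence L).IsSentence := by
  rw [Formula.IsSentence]
  show ((Term.var 0 : Term L).fvars ∪ (Term.var 0 : Term L).fvars) \ {0} = ∅
  have h : (Term.var 0 : Term L).fvars = {0} := rfl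
  rw [h]
  simp

lemma trivSentence_valid (M : Structure L A) : Valid M (trivSentence L) := by
  intro v
  show (⨆ a : M.Dom, (Formula.eq (.var 0) (.var 0)).val M (Function.update v 0 a)) = 1
  have : ∀ a : M.Dom, (Formula.eq (.var 0) (.var 0) : Formula L).val M
      (Function.update v 0 a) = 1 := by
    intro a
    show (if (Term.var 0 : Term L).val M (Function.update v 0 a) =
      (Term.var 0 : Term L).val M (Function.update v 0 a) then (1:A) else ⊥) = 1
    rw [if_pos rfl]
  rw [iSup_congr this]
  exact iSup_const

end Main
/-- **Corollary: single-sentence existential positive characterization.**  A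
consistent sentence `φ` is 1-equivalent to an existential positive sentence
iff the class of `A`-models of `φ` is closed under homomorphisms. -/
theorem expos_single_sentence_char {A : Type u} [MTLChain A] {L : Lang.{u}}
    (φ : Formula L) (hφ : φ.IsSentence)
    (hcons : ∃ M : Structure L A, Valid M φ) :
    (∃ α : Formula L, IsExPos α ∧ α.IsSentence ∧
        ∀ M : Structure L A, Valid M φ ↔ Valid M α) ↔
      ∀ (M N : Structure L A) (g : M.Dom → N.Dom),
        IsHom M N g → Valid M φ → Valid N φ := by
  constructor
  · rintro ⟨α, hexp, hsent, hiff⟩ M N g hg hM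
    have hMα : Valid M α := (hiff M).1 hM
    have hNα : Valid N α := by
      have v₀ : ℕ → M.Dom := fun _ => Classical.arbitrary M.Dom
      rw [valid_iff_val_one hsent (g ∘ v₀)]
      exact hexp.val_hom hg ((valid_iff_val_one hsent v₀).1 hMα)
    exact (hiff N).2 hNα
  · intro hclosed
    by_cases hbot : (⊥ : A) = 1
    · have htriv : ∀ (M : Structure L A) (ψ : Formula L), Valid M ψ := by
        intro M ψ v
        exact A_eq_one_of_one_le (hbot ▸ bot_le)
      exact ⟨trivSentence L, trivSentence_expos, trivSentence_sentence,
        fun M => ⟨fun _ => trivSentence_valid M, fun _ => htriv M φ⟩⟩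
    · rcases exists_finite_expos_axioms hφ hcons hbot hclosed with ⟨l, hl1, hl2⟩
      by_cases hlne : l = []
      · subst hlne
        refine ⟨trivSentence L, trivSentence_expos, trivSentence_sentence, fun M => ?_⟩
        constructor
        · intro _; exact trivSentence_valid M
        · intro _; exact hl2 M (fun α hα => absurd hα List.not_mem_nil)
      · rcases valid_listAnd (A := A) l hlne (fun α hα => ⟨(hl1 α hα).1, (hl1 α hα).2.1⟩)
          with ⟨γ, hγ1, hγ2, hγ3⟩
        refine ⟨γ, hγ1, hγ2, fun M => ?_⟩
        constructor
        · intro hM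
          exact (hγ3 M).2 (fun α hα => (hl1 α hα).2.2 M hM)
        · intro hγ
          exact hl2 M ((hγ3 M).1 hγ)
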